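/- Let μ be a finite, compactly supported measure on ℝ^d that is absolutely continuous with respect to Lebesgue measure, let x_1, …, x_N ∈ ℝ^d (N ≥ 1) be pairwise distinct, and let ν_1, …, ν_N ∈ ℝ. Then the Kantorovich functional K is differentiable at every ψ ∈ ℝ^N with partial derivatives ∂K/∂ψ_i (ψ) = ν_i − μ(Lag_i^ψ) for each i; i.e. K has at ψ the (total Fréchet) derivative given by the linear map h ↦ Σ_{i=1}^N (ν_i − μ(Lag_i^ψ)) h_i. -/

import Mathlib

/-!
Ties `‖p - x i‖² - ψ i = ‖p - x j‖² - ψ j` between distinct sites happen on affine hyperplanes,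
so for `μ`-a.e. `p` the minimum defining the integrand of `K` is attained at a single index `i`,
which stays the minimiser for nearby weights. There the integrand is locally `φ ↦ ‖p - x i‖² - φ i`,
with derivative `h ↦ -h i = -∑ j 1_{Lag_j}(p) h j`. The integrand is `1`-Lipschitz in the weights
and `μ` is finite, so differentiation under the integral sign (dominated convergence) gives
`h ↦ -∑ j μ(Lag_j) h j`, to which the linear term adds `h ↦ ∑ j ν j h j`.
-/

open MeasureTheory

/-- The Laguerre cell of index `i` for sites `x` and weights `ψ`. -/
def Lag {d N : ℕ} (x : Fin N → EuclideanSpace ℝ (Fin d)) (ψ : Fin N → ℝ) (i : Fin N) :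
    Set (EuclideanSpace ℝ (Fin d)) :=
  {p | ∀ j, j ≠ i → ‖p - x i‖ ^ 2 - ψ i ≤ ‖p - x j‖ ^ 2 - ψ j}

/-- The semi-discrete Kantorovich dual functional. -/
noncomputable def Kfun {d N : ℕ} (μ : Measure (EuclideanSpace ℝ (Fin d)))
    (x : Fin N → EuclideanSpace ℝ (Fin d)) (ν : Fin N → ℝ) (ψ : Fin N → ℝ) : ℝ :=
  (∫ p, (⨅ i : Fin N, (‖p - x i‖ ^ 2 - ψ i)) ∂μ) + ∑ i : Fin N, ψ i * ν i

open Filter Topology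

section CTransform

variable {ι E : Type*} [Fintype ι] [NormedAddCommGroup E]

noncomputable def cTransform (x : ι → E) (ψ : ι → ℝ) (p : E) : ℝ :=
  ⨅ i, (‖p - x i‖ ^ 2 - ψ i)

theorem cTransform_eq_of_forall_le {x : ι → E} {ψ : ι → ℝ} {p : E} {i : ι}
    (hi : ∀ j, ‖p - x i‖ ^ 2 - ψ i ≤ ‖p - x j‖ ^ 2 - ψ j) :
    cTransform x ψ p = ‖p - x i‖ ^ 2 - ψ i :=
  have : Nonempty ι := ⟨i⟩
  le_antisymm (ciInf_le (Finite.bddBelow_range _) i) (le_ciInf hi)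

theorem lipschitzWith_cTransform_weights [Nonempty ι] (x : ι → E) (p : E) :
    LipschitzWith 1 fun ψ => cTransform x ψ p := by
  refine LipschitzWith.of_le_add fun φ χ => ?_
  obtain ⟨i, hi⟩ := Finite.exists_min fun j => ‖p - x j‖ ^ 2 - χ j
  have hdist : χ i - φ i ≤ dist φ χ := by
    linarith [neg_abs_le (φ i - χ i), Real.dist_eq (φ i) (χ i), dist_le_pi_dist φ χ i]
  calc cTransform x φ p ≤ ‖p - x i‖ ^ 2 - φ i := ciInf_le (Finite.bddBelow_range _) i
    _ ≤ ‖p - x i‖ ^ 2 - χ i + dist φ χ := by linarith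
    _ = cTransform x χ p + dist φ χ := by rw [cTransform_eq_of_forall_le hi]

theorem continuous_cTransform [Nonempty ι] (x : ι → E) (ψ : ι → ℝ) :
    Continuous (cTransform x ψ) := by
  have : cTransform x ψ = fun p =>
      Finset.univ.inf' Finset.univ_nonempty fun i => ‖p - x i‖ ^ 2 - ψ i :=
    funext fun p => (Finset.inf'_univ_eq_ciInf _).symm
  rw [this]
  exact Continuous.finset_inf'_apply _ fun i _ => by fun_prop

theorem integrable_cTransform [Nonempty ι] [MeasurableSpace E] [OpensMeasurableSpace E]
    {μ : Measure E} [IsFiniteMeasure μ] {K : Set E} (hK : IsCompact K) (hKμ : μ Kᶜ = 0)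
    (x : ι → E) (ψ : ι → ℝ) : Integrable (cTransform x ψ) μ := by
  rw [← Measure.restrict_eq_self_of_ae_mem (mem_ae_iff.2 hKμ)]
  exact (continuous_cTransform x ψ).continuousOn.integrableOn_compact hK

theorem hasFDerivAt_cTransform_weights {x : ι → E} {ψ : ι → ℝ} {p : E} {i : ι}
    (hi : ∀ j ≠ i, ‖p - x i‖ ^ 2 - ψ i < ‖p - x j‖ ^ 2 - ψ j) :
    HasFDerivAt (fun φ => cTransform x φ p)
      (-ContinuousLinearMap.proj (R := ℝ) (φ := fun _ : ι => ℝ) i) ψ := by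
  have hmin : ∀ᶠ φ in 𝓝 ψ, ∀ j, ‖p - x i‖ ^ 2 - φ i ≤ ‖p - x j‖ ^ 2 - φ j := by
    refine eventually_all.2 fun j => ?_
    rcases eq_or_ne j i with rfl | hj
    · exact .of_forall fun _ => le_rfl
    · exact ((continuous_const.sub (continuous_apply i)).continuousAt.eventually_lt
        (continuous_const.sub (continuous_apply j)).continuousAt (hi j hj)).mono fun _ => le_of_lt
  exact ((hasFDerivAt_apply i ψ).const_sub _).congr_of_eventuallyEq
    (hmin.mono fun φ hφ => cTransform_eq_of_forall_le hφ)

end CTransform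

section Ties

variable {E : Type*} [NormedAddCommGroup E] [InnerProductSpace ℝ E] [FiniteDimensional ℝ E]
  [MeasurableSpace E] [BorelSpace E]

theorem addHaar_setOf_inner_eq (μ : Measure E) [μ.IsAddHaarMeasure] {v : E} (hv : v ≠ 0)
    (c : ℝ) : μ {p | inner ℝ v p = c} = 0 := by
  rcases Set.eq_empty_or_nonempty {p | inner ℝ v p = c} with h | ⟨p₀, hp₀ : inner ℝ v p₀ = c⟩
  · rw [h, measure_empty]
  let H := AffineSubspace.mk' p₀ (LinearMap.ker (innerₛₗ ℝ v))
  have hsub : {p | inner ℝ v p = c} ⊆ H := fun p (hp : inner ℝ v p = c) => by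
    simp [H, AffineSubspace.mem_mk', inner_sub_right, hp, hp₀]
  have hH : H ≠ ⊤ := by
    intro htop
    have : v ∈ H.direction := by rw [htop, AffineSubspace.direction_top]; trivial
    rw [AffineSubspace.direction_mk', LinearMap.mem_ker, innerₛₗ_apply_apply,
      inner_self_eq_zero] at this
    exact hv this
  exact measure_mono_null hsub (Measure.addHaar_affineSubspace μ H hH)

theorem addHaar_setOf_sq_norm_sub_eq (μ : Measure E) [μ.IsAddHaarMeasure] {a b : E}
    (hab : a ≠ b) (s t : ℝ) : μ {p | ‖p - a‖ ^ 2 - s = ‖p - b‖ ^ 2 - t} = 0 := by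
  refine measure_mono_null (fun p hp => ?_) (addHaar_setOf_inner_eq μ (sub_ne_zero.2 hab.symm)
    ((‖b‖ ^ 2 - ‖a‖ ^ 2 + s - t) / 2))
  rw [Set.mem_ofPred_eq, norm_sub_sq_real, norm_sub_sq_real, real_inner_comm a p,
    real_inner_comm b p] at hp
  rw [Set.mem_ofPred_eq, inner_sub_left]
  linarith

theorem ae_exists_forall_sq_norm_sub_lt {ι : Type*} [Finite ι] [Nonempty ι]
    {μ ν : Measure E} [ν.IsAddHaarMeasure] (hμ : μ ≪ ν) {x : ι → E}
    (hx : Function.Injective x) (ψ : ι → ℝ) :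
    ∀ᵐ p ∂μ, ∃ i, ∀ j ≠ i, ‖p - x i‖ ^ 2 - ψ i < ‖p - x j‖ ^ 2 - ψ j := by
  have hties : ∀ᵐ p ∂μ, ∀ i j, i ≠ j → ‖p - x i‖ ^ 2 - ψ i ≠ ‖p - x j‖ ^ 2 - ψ j := by
    refine ae_all_iff.2 fun i => ae_all_iff.2 fun j => ?_
    rcases eq_or_ne i j with rfl | hij
    · exact .of_forall fun _ h => absurd rfl h
    · exact (measure_eq_zero_iff_ae_notMem.1
        (hμ (addHaar_setOf_sq_norm_sub_eq ν (hx.ne hij) (ψ i) (ψ j)))).mono fun _ h _ => h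
  filter_upwards [hties] with p hp
  obtain ⟨i, hi⟩ := Finite.exists_min fun j => ‖p - x j‖ ^ 2 - ψ j
  exact ⟨i, fun j hj => (hi j).lt_of_ne (hp i j hj.symm)⟩

end Ties

section Laguerre

variable {d N : ℕ}

theorem isClosed_Lag (x : Fin N → EuclideanSpace ℝ (Fin d)) (ψ : Fin N → ℝ) (i : Fin N) :
    IsClosed (Lag x ψ i) := by
  simp only [Lag, Set.ofPred_forall]
  exact isClosed_iInter fun j => isClosed_iInter fun _ => isClosed_le (by fun_prop) (by fun_prop)

theorem mem_Lag_iff_of_forall_lt {x : Fin N → EuclideanSpace ℝ (Fin d)} {ψ : Fin N → ℝ}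
    {p : EuclideanSpace ℝ (Fin d)} {i : Fin N}
    (hi : ∀ j ≠ i, ‖p - x i‖ ^ 2 - ψ i < ‖p - x j‖ ^ 2 - ψ j) (j : Fin N) :
    p ∈ Lag x ψ j ↔ j = i := by
  refine ⟨fun hj => by_contra fun hji => (hj i (Ne.symm hji)).not_gt (hi j hji), ?_⟩
  rintro rfl k hk
  exact (hi k hk).le

theorem hasFDerivAt_integral_cTransform [Nonempty (Fin N)]
    {μ : Measure (EuclideanSpace ℝ (Fin d))} [IsFiniteMeasure μ] (hμ : μ ≪ volume)
    {x : Fin N → EuclideanSpace ℝ (Fin d)} (hx : Function.Injective x) {ψ : Fin N → ℝ} (hint : Integrable (cTransform x ψ) μ) :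
    HasFDerivAt (fun φ => ∫ p, cTransform x φ p ∂μ)
      (-∑ i, (μ (Lag x ψ i)).toReal • ContinuousLinearMap.proj (R := ℝ) (φ := fun _ => ℝ) i)
      ψ := by
  set F' : EuclideanSpace ℝ (Fin d) → (Fin N → ℝ) →L[ℝ] ℝ := fun p =>
    -∑ i, (Lag x ψ i).indicator (fun _ => ContinuousLinearMap.proj (R := ℝ) (φ := fun _ => ℝ) i) p
  have hLag i : MeasurableSet (Lag x ψ i) := (isClosed_Lag x ψ i).measurableSet
  have hF'_meas : AEStronglyMeasurable F' μ :=
    (Finset.aestronglyMeasurable_fun_sum _ fun i _ =>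
      aestronglyMeasurable_const.indicator (hLag i)).neg
  have hF' : ∫ p, F' p ∂μ = -∑ i, (μ (Lag x ψ i)).toReal • ContinuousLinearMap.proj i := by
    simp only [F']
    rw [integral_neg, integral_finsetSum _ fun i _ => (integrable_const _).indicator (hLag i)]
    simp only [integral_indicator_const _ (hLag _), measureReal_def]
  have hderiv : ∀ᵐ p ∂μ, HasFDerivAt (fun φ => cTransform x φ p) (F' p) ψ := by
    filter_upwards [ae_exists_forall_sq_norm_sub_lt hμ hx ψ] with p ⟨i, hi⟩
    have : F' p = -ContinuousLinearMap.proj i := by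
      simp only [F']
      rw [Fintype.sum_eq_single i fun j hj => Set.indicator_of_notMem
        (mt (mem_Lag_iff_of_forall_lt hi j).1 hj) _,
        Set.indicator_of_mem ((mem_Lag_iff_of_forall_lt hi i).2 rfl)]
    rw [this]
    exact hasFDerivAt_cTransform_weights hi
  rw [← hF']
  exact (hasFDerivAt_integral_of_dominated_loc_of_lip (bound := fun _ => 1) Filter.univ_mem
    (.of_forall fun φ => (continuous_cTransform x φ).aestronglyMeasurable) hint hF'_meas
    (.of_forall fun p => by
      simpa only [map_one] using (lipschitzWith_cTransform_weights x p).lipschitzOnWith)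
    (integrable_const 1) hderiv).2

end Laguerre

theorem kantorovich_hasFDerivAt_general {d N : ℕ}
    (μ : Measure (EuclideanSpace ℝ (Fin d))) [IsFiniteMeasure μ]
    (hsupp : ∃ K : Set (EuclideanSpace ℝ (Fin d)), IsCompact K ∧ μ Kᶜ = 0)
    (hac : μ ≪ volume)
    (x : Fin N → EuclideanSpace ℝ (Fin d)) (hx : Function.Injective x)
    (ν : Fin N → ℝ) (ψ : Fin N → ℝ) :
    HasFDerivAt (Kfun μ x ν)
      (∑ i : Fin N, (ν i - (μ (Lag x ψ i)).toReal) •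
        (ContinuousLinearMap.proj i : (Fin N → ℝ) →L[ℝ] ℝ)) ψ := by
  rcases isEmpty_or_nonempty (Fin N) with _ | _
  · simpa using hasFDerivAt_of_subsingleton (Kfun μ x ν) ψ
  obtain ⟨K, hK, hKμ⟩ := hsupp
  have hcost := hasFDerivAt_integral_cTransform hac hx (integrable_cTransform hK hKμ x ψ)
  have hlin : HasFDerivAt (fun φ : Fin N → ℝ => ∑ i, φ i * ν i)
      (∑ i, ν i • ContinuousLinearMap.proj (R := ℝ) (φ := fun _ => ℝ) i) ψ :=
    HasFDerivAt.fun_sum fun i _ => (hasFDerivAt_apply i ψ).mul_const (ν i)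
  have hsplit : ∑ i, (ν i - (μ (Lag x ψ i)).toReal) • ContinuousLinearMap.proj i =
      -∑ i, (μ (Lag x ψ i)).toReal • ContinuousLinearMap.proj (R := ℝ) (φ := fun _ => ℝ) i +
        ∑ i, ν i • ContinuousLinearMap.proj i := by
    refine ContinuousLinearMap.ext fun h => ?_
    simp only [sum_apply, smul_apply, add_apply, neg_apply, ContinuousLinearMap.proj_apply,
      smul_eq_mul, sub_mul, Finset.sum_sub_distrib]
    ring
  rw [hsplit]
  exact hcost.add hlin

/-- the Kantorovich functional is (Fréchet) differentiable at every
`ψ`, with derivative `h ↦ Σ_i (ν_i − μ(Lag_i^ψ)) h_i`. -/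
theorem kantorovich_hasFDerivAt {d N : ℕ} (hN : 1 ≤ N)
    (μ : Measure (EuclideanSpace ℝ (Fin d))) [IsFiniteMeasure μ]
    (hsupp : ∃ K : Set (EuclideanSpace ℝ (Fin d)), IsCompact K ∧ μ Kᶜ = 0)
    (hac : μ ≪ volume)
    (x : Fin N → EuclideanSpace ℝ (Fin d)) (hx : Function.Injective x)
    (ν : Fin N → ℝ) (ψ : Fin N → ℝ) :
    HasFDerivAt (Kfun μ x ν)
      (∑ i : Fin N, (ν i - (μ (Lag x ψ i)).toReal) •
        (ContinuousLinearMap.proj i : (Fin N → ℝ) →L[ℝ] ℝ)) ψ :=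
  kantorovich_hasFDerivAt_general μ hsupp hac x hx ν ψ
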